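/- arXiv:1209.5732 — 5 statements merged into one kernel-verified Lean document; each statement's English description precedes it below -/
import Mathlib

section
/- Let A : ℓ¹(ℕ) → Y be a bounded linear operator into a Banach space Y with ‖A e_k‖_Y → 0, and suppose for every k there exists f_k ∈ Y* with A* f_k = e_k (i.e., ⟨f_k, A x⟩ = x_k for all x ∈ ℓ¹(ℕ)). Then the closure of the range of A* in ℓ^∞(ℕ) equals c₀. -/
/-!
Since `A* w` has coordinates `w (A e_k)` and `A e_k → 0`, every `A* w` lies in `c₀`.
Conversely the functionals `f_j` are biorthogonal to the vectors `A e_k`, so for `z ∈ c₀`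
the functional `w = ∑_{j < N} z_j f_j` has `A* w` equal to the truncation of `z` after `N`
terms, which is uniformly `ε`-close to `z` once `|z_k| ≤ ε` for `k ≥ N`.
-/

open Filter Topology Finset

theorem sum_smul_apply_of_biorthogonal {𝕜 E : Type*} [NormedField 𝕜] [SeminormedAddCommGroup E]
    [NormedSpace 𝕜 E] {f : ℕ → E →L[𝕜] 𝕜} {u : ℕ → E}
    (hfu : ∀ j k, f j (u k) = (Pi.single k 1 : ℕ → 𝕜) j) (z : ℕ → 𝕜) (N k : ℕ) :
    (∑ j ∈ range N, z j • f j) (u k) = if k < N then z k else 0 := by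
  simp only [_root_.sum_apply, smul_apply, hfu, smul_eq_mul,
    Pi.single_apply, mul_ite, mul_one, mul_zero, sum_ite_eq', mem_range]

theorem exists_abs_sub_truncation_le {z : ℕ → ℝ} (hz : Tendsto z atTop (𝓝 0))
    {ε : ℝ} (hε : 0 < ε) : ∃ N, ∀ k, |z k - if k < N then z k else 0| ≤ ε := by
  obtain ⟨N, hN⟩ := Metric.tendsto_atTop.mp hz ε hε
  refine ⟨N, fun k => ?_⟩
  split_ifs with hk
  · simpa using hε.le
  · simpa [Real.dist_eq] using (hN k (not_lt.mp hk)).le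

theorem stmt4_general {Y : Type*} [NormedAddCommGroup Y] [NormedSpace ℝ Y]
    (A : lp (fun _ : ℕ => ℝ) 1 →L[ℝ] Y)
    (hAe : Tendsto (fun k : ℕ => ‖A (lp.single 1 k (1:ℝ))‖) atTop (𝓝 0))
    (f : ℕ → (Y →L[ℝ] ℝ))
    (hf : ∀ (k : ℕ) (x : lp (fun _ : ℕ => ℝ) 1), f k (A x) = x k) :
    (∀ w : Y →L[ℝ] ℝ,
        Tendsto (fun k : ℕ => w (A (lp.single 1 k (1:ℝ)))) atTop (𝓝 0)) ∧
    (∀ z : ℕ → ℝ, Tendsto z atTop (𝓝 0) → ∀ ε > (0:ℝ),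
        ∃ w : Y →L[ℝ] ℝ, ∀ k : ℕ, |z k - w (A (lp.single 1 k (1:ℝ)))| ≤ ε) := by
  have hAe₀ : Tendsto (fun k : ℕ => A (lp.single 1 k (1:ℝ))) atTop (𝓝 0) :=
    tendsto_zero_iff_norm_tendsto_zero.mpr hAe
  refine ⟨fun w => w.map_zero ▸ (w.continuous.tendsto 0).comp hAe₀, fun z hz ε hε => ?_⟩
  obtain ⟨N, hN⟩ := exists_abs_sub_truncation_le hz hε
  refine ⟨∑ j ∈ range N, z j • f j, fun k => ?_⟩
  rw [sum_smul_apply_of_biorthogonal (u := fun k => A (lp.single 1 k 1)) (fun j k => hf j _)]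
  exact hN k

/-- If `A : ℓ¹(ℕ) → Y` is bounded linear with `‖A e_k‖ → 0` and for every `k`
there is `f_k ∈ Y*` with `A* f_k = e_k`, then the closure of the range of `A*` in
`ℓ^∞(ℕ)` equals `c₀`: every `A* w` lies in `c₀`, and every `z ∈ c₀` can be approximated
in the sup norm by elements `A* w`, `w ∈ Y*`. -/
theorem stmt4 {Y : Type*} [NormedAddCommGroup Y] [NormedSpace ℝ Y] [CompleteSpace Y]
    (A : lp (fun _ : ℕ => ℝ) 1 →L[ℝ] Y)
    (hAe : Tendsto (fun k : ℕ => ‖A (lp.single 1 k (1:ℝ))‖) atTop (𝓝 0))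
    (f : ℕ → (Y →L[ℝ] ℝ))
    (hf : ∀ (k : ℕ) (x : lp (fun _ : ℕ => ℝ) 1), f k (A x) = x k) :
    (∀ w : Y →L[ℝ] ℝ,
        Tendsto (fun k : ℕ => w (A (lp.single 1 k (1:ℝ)))) atTop (𝓝 0)) ∧
    (∀ z : ℕ → ℝ, Tendsto z atTop (𝓝 0) → ∀ ε > (0:ℝ),
        ∃ w : Y →L[ℝ] ℝ, ∀ k : ℕ, |z k - w (A (lp.single 1 k (1:ℝ)))| ≤ ε) :=
  stmt4_general A hAe f hf
end

section
/- Let A : ℓ¹(ℕ) → Y be a bounded linear operator with ‖A e_k‖_Y → 0. If ξ ∈ ℓ^∞(ℕ) satisfies s := limsup_{k→∞} |ξ_k| > 0, then for every R ≥ 0 the distance function d_ξ(R) := inf { ‖ξ − A*w‖_{ℓ^∞} : w ∈ Y*, ‖w‖_{Y*} ≤ R } satisfies d_ξ(R) ≥ s. -/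
open Filter Topology

/-! Since `‖A e_k‖ → 0`, also `w (A e_k) → 0`, so eventually
`|ξ_k| ≤ |ξ_k - w (A e_k)| + ε ≤ sup_j |ξ_j - w (A e_j)| + ε`; hence the limsup of `|ξ_k|` is at
most that supremum. -/

theorem limsup_norm_le_iSup_norm_sub_of_tendsto_zero {ι E : Type*} [SeminormedAddCommGroup E]
    {l : Filter ι} [l.NeBot] {ξ g : ι → E} (hg : Tendsto g l (𝓝 0))
    (hbdd : BddAbove (Set.range fun k => ‖ξ k - g k‖)) :
    limsup (fun k => ‖ξ k‖) l ≤ ⨆ k, ‖ξ k - g k‖ := by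
  refine le_of_forall_pos_le_add fun ε hε =>
    limsup_le_of_le (isCoboundedUnder_le_of_le l fun _ => norm_nonneg _) ?_
  filter_upwards [(tendsto_zero_iff_norm_tendsto_zero.1 hg).eventually (gt_mem_nhds hε)]
    with k hk
  calc ‖ξ k‖ ≤ ‖ξ k - g k‖ + ‖g k‖ := norm_le_norm_sub_add _ _
    _ ≤ (⨆ k, ‖ξ k - g k‖) + ε := add_le_add (le_ciSup hbdd k) hk.le

theorem ContinuousLinearMap.tendsto_zero_of_tendsto_norm_zero {ι 𝕜 E F : Type*}
    [NontriviallyNormedField 𝕜] [SeminormedAddCommGroup E] [NormedSpace 𝕜 E]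
    [SeminormedAddCommGroup F] [NormedSpace 𝕜 F] {l : Filter ι} (f : E →L[𝕜] F) {x : ι → E}
    (hx : Tendsto (fun k => ‖x k‖) l (𝓝 0)) : Tendsto (fun k => f (x k)) l (𝓝 0) :=
  (map_zero f ▸ f.continuous.tendsto 0).comp (tendsto_zero_iff_norm_tendsto_zero.2 hx)

theorem stmt5_general {Y : Type*} [NormedAddCommGroup Y] [NormedSpace ℝ Y]
    (A : lp (fun _ : ℕ => ℝ) 1 →L[ℝ] Y)
    (hAe : Tendsto (fun k : ℕ => ‖A (lp.single 1 k (1:ℝ))‖) atTop (𝓝 0))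
    (ξ : ℕ → ℝ) (M : ℝ) (hbd : ∀ k, |ξ k| ≤ M) :
    ∀ R : ℝ, 0 ≤ R → ∀ w : Y →L[ℝ] ℝ, ‖w‖ ≤ R →
      Filter.limsup (fun k : ℕ => |ξ k|) atTop ≤
        ⨆ k : ℕ, |ξ k - w (A (lp.single 1 k (1:ℝ)))| := by
  intro _ _ w _
  have hwAe := w.tendsto_zero_of_tendsto_norm_zero hAe
  obtain ⟨C, hC⟩ := (Metric.isBounded_range_of_tendsto _ hwAe).exists_norm_le
  have hbdd : BddAbove (Set.range fun k => ‖ξ k - w (A (lp.single 1 k (1:ℝ)))‖) := by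
    refine ⟨M + C, Set.forall_mem_range.2 fun k => ?_⟩
    calc _ ≤ ‖ξ k‖ + ‖w (A (lp.single 1 k (1:ℝ)))‖ := norm_sub_le _ _
      _ ≤ M + C := add_le_add (hbd k) (hC _ ⟨k, rfl⟩)
  simpa only [Real.norm_eq_abs] using limsup_norm_le_iSup_norm_sub_of_tendsto_zero hwAe hbdd

/-- If `A : ℓ¹(ℕ) → Y` is bounded linear with `‖A e_k‖ → 0` and
`ξ ∈ ℓ^∞(ℕ)` satisfies `s := limsup |ξ_k| > 0`, then for every `R ≥ 0` the distance
function `d_ξ(R) = inf {‖ξ − A* w‖_∞ : ‖w‖ ≤ R}` satisfies `d_ξ(R) ≥ s`, i.e. for all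
`w` with `‖w‖ ≤ R` one has `s ≤ sup_k |ξ_k − w (A e_k)|`. -/
theorem stmt5 {Y : Type*} [NormedAddCommGroup Y] [NormedSpace ℝ Y] [CompleteSpace Y]
    (A : lp (fun _ : ℕ => ℝ) 1 →L[ℝ] Y)
    (hAe : Tendsto (fun k : ℕ => ‖A (lp.single 1 k (1:ℝ))‖) atTop (𝓝 0))
    (ξ : ℕ → ℝ) (M : ℝ) (hbd : ∀ k, |ξ k| ≤ M)
    (hs : 0 < Filter.limsup (fun k : ℕ => |ξ k|) atTop) :
    ∀ R : ℝ, 0 ≤ R → ∀ w : Y →L[ℝ] ℝ, ‖w‖ ≤ R →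
      Filter.limsup (fun k : ℕ => |ξ k|) atTop ≤
        ⨆ k : ℕ, |ξ k - w (A (lp.single 1 k (1:ℝ)))| :=
  stmt5_general A hAe ξ M hbd
end

section
/- Let A : ℓ¹(ℕ) → Y be a bounded linear operator with ‖A e_k‖_Y → 0, and let x† ∈ ℓ¹(ℕ) be non-sparse, i.e., x†_k ≠ 0 for infinitely many k. Then every subgradient ξ ∈ ∂‖·‖₁(x†) (an element ξ ∈ ℓ^∞ with ξ_k = sign(x†_k) when x†_k ≠ 0 and |ξ_k| ≤ 1 otherwise) satisfies inf { ‖ξ − A*w‖_{ℓ^∞} : w ∈ Y* } ≥ 1; in particular ξ is not in the closure of the range of A*. -/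
/-!
For a dual functional `w`, the numbers `w (A e_k)` tend to `0` because `A e_k → 0`. Non-sparsity
of `x†` gives infinitely many `k` with `|ξ_k| = 1`, and at those `k` with `w (A e_k)` small,
`|ξ_k - w (A e_k)|` is close to `1`.
-/

open Filter Topology

theorem le_iSup_abs_sub_of_tendsto_zero {ξ b : ℕ → ℝ} {M c : ℝ} (hξ : ∀ k, |ξ k| ≤ M)
    (hb : Tendsto b atTop (𝓝 0)) (hc : ∃ᶠ k in atTop, c ≤ |ξ k|) :
    c ≤ ⨆ k, |ξ k - b k| := by
  obtain ⟨B, hB⟩ := hb.abs.bddAbove_range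
  have hbdd : BddAbove (Set.range fun k => |ξ k - b k|) := by
    refine ⟨M + B, ?_⟩
    rintro _ ⟨k, rfl⟩
    exact (abs_sub _ _).trans (add_le_add (hξ k) (hB ⟨k, rfl⟩))
  refine le_of_forall_pos_le_add fun ε hε => ?_
  have hsmall : ∀ᶠ k in atTop, |b k| < ε := by
    simpa using hb.abs.eventually (eventually_lt_nhds (by simpa using hε))
  obtain ⟨k, hck, hbk⟩ := (hc.and_eventually hsmall).exists
  calc c ≤ |ξ k| - |b k| + ε := by linarith
    _ ≤ |ξ k - b k| + ε := by gcongr; exact abs_sub_abs_le_abs_sub _ _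
    _ ≤ (⨆ k, |ξ k - b k|) + ε := by gcongr; exact le_ciSup hbdd k

theorem stmt6_general {Y : Type*} [NormedAddCommGroup Y] [NormedSpace ℝ Y]
    (A : lp (fun _ : ℕ => ℝ) 1 →L[ℝ] Y)
    (hAe : Tendsto (fun k : ℕ => ‖A (lp.single 1 k (1:ℝ))‖) atTop (𝓝 0))
    (xdag : lp (fun _ : ℕ => ℝ) 1)
    (hnonsparse : {k : ℕ | xdag k ≠ 0}.Infinite)
    (ξ : ℕ → ℝ)
    (hsub₁ : ∀ k, 0 < xdag k → ξ k = 1)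
    (hsub₂ : ∀ k, xdag k < 0 → ξ k = -1)
    (hsub₃ : ∀ k, |ξ k| ≤ 1) :
    ∀ w : Y →L[ℝ] ℝ, 1 ≤ ⨆ k : ℕ, |ξ k - w (A (lp.single 1 k (1:ℝ)))| := by
  intro w
  have hwAe : Tendsto (fun k : ℕ => w (A (lp.single 1 k (1:ℝ)))) atTop (𝓝 0) := by
    simpa [Function.comp_def] using (w.continuous.tendsto 0).comp (tendsto_zero_iff_norm_tendsto_zero.mpr hAe)
  have hsign : ∃ᶠ k in atTop, 1 ≤ |ξ k| := by
    refine (Nat.frequently_atTop_iff_infinite.mpr hnonsparse).mono fun k hk => ?_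
    rcases (show xdag k ≠ 0 from hk).lt_or_gt with hneg | hpos
    · simp [hsub₂ k hneg]
    · simp [hsub₁ k hpos]
  exact le_iSup_abs_sub_of_tendsto_zero hsub₃ hwAe hsign

/-- If `A : ℓ¹(ℕ) → Y` is bounded linear with `‖A e_k‖ → 0` and
`x† ∈ ℓ¹(ℕ)` is non-sparse (infinitely many nonzero components), then every subgradient
`ξ ∈ ∂‖·‖₁(x†)` satisfies `inf {‖ξ − A* w‖_∞ : w ∈ Y*} ≥ 1`, i.e.
`1 ≤ sup_k |ξ_k − w (A e_k)|` for every `w ∈ Y*`; in particular `ξ` is not in the closure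
of the range of `A*`. -/
theorem stmt6 {Y : Type*} [NormedAddCommGroup Y] [NormedSpace ℝ Y] [CompleteSpace Y]
    (A : lp (fun _ : ℕ => ℝ) 1 →L[ℝ] Y)
    (hAe : Tendsto (fun k : ℕ => ‖A (lp.single 1 k (1:ℝ))‖) atTop (𝓝 0))
    (xdag : lp (fun _ : ℕ => ℝ) 1)
    (hnonsparse : {k : ℕ | xdag k ≠ 0}.Infinite)
    (ξ : ℕ → ℝ)
    (hsub₁ : ∀ k, 0 < xdag k → ξ k = 1)
    (hsub₂ : ∀ k, xdag k < 0 → ξ k = -1)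
    (hsub₃ : ∀ k, |ξ k| ≤ 1) :
    ∀ w : Y →L[ℝ] ℝ, 1 ≤ ⨆ k : ℕ, |ξ k - w (A (lp.single 1 k (1:ℝ)))| :=
  stmt6_general A hAe xdag hnonsparse ξ hsub₁ hsub₂ hsub₃
end

section
/- Let A : ℓ¹(ℕ) → Y be a bounded linear operator into a Banach space and suppose for each k ∈ ℕ there exists f_k ∈ Y* with ⟨f_k, A x⟩ = x_k for all x ∈ ℓ¹(ℕ). Then for all x, x† ∈ ℓ¹(ℕ) and all n ∈ ℕ: ‖x − x†‖₁ ≤ ‖x‖₁ − ‖x†‖₁ + 2( ∑_{k>n} |x†_k| + ‖A(x − x†)‖_Y · ∑_{k≤n} ‖f_k‖_{Y*} ). -/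
/-!
Split `ℓ¹` into the first `n` coordinates and the tail. On the tail the triangle inequality
`|x_k - x†_k| ≤ |x_k| + |x†_k|` costs `2 ∑_{k≥n} |x†_k|` against `‖x‖₁ - ‖x†‖₁`; on the head
`|x†_k| ≤ |x_k| + |x_k - x†_k|` costs `2 ∑_{k<n} |x_k - x†_k|`, and each of these coordinates is
recovered from `A (x - x†)` by the functional `f_k`, so it is at most `‖f_k‖ ‖A (x - x†)‖`.
-/

open Finset

namespace lp

theorem hasSum_abs_of_one {ι : Type*} (z : lp (fun _ : ι => ℝ) 1) :
    HasSum (fun k => |z k|) ‖z‖ := by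
  simpa [Real.norm_eq_abs] using lp.hasSum_norm (p := 1) (by norm_num) z

theorem summable_abs_of_one {ι : Type*} (z : lp (fun _ : ι => ℝ) 1) :
    Summable fun k => |z k| :=
  (hasSum_abs_of_one z).summable

variable (x y : lp (fun _ : ℕ => ℝ) 1) (n : ℕ)

theorem norm_eq_sum_range_add_tsum_nat_add_of_one :
    ‖x‖ = ∑ k ∈ range n, |x k| + ∑' k, |x (k + n)| := by
  rw [← (hasSum_abs_of_one x).tsum_eq, (summable_abs_of_one x).sum_add_tsum_nat_add n]

theorem tsum_abs_sub_nat_add_le :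
    ∑' k, |(x - y) (k + n)| ≤ ∑' k, |x (k + n)| + ∑' k, |y (k + n)| := by
  have tail_summable (z : lp (fun _ : ℕ => ℝ) 1) : Summable fun k => |z (k + n)| :=
    (summable_nat_add_iff n).2 (summable_abs_of_one z)
  rw [← (tail_summable x).tsum_add (tail_summable y)]
  exact (tail_summable (x - y)).tsum_le_tsum (fun k => abs_sub _ _)
    ((tail_summable x).add (tail_summable y))

theorem sum_range_abs_le_sum_range_abs_add_abs_sub :
    ∑ k ∈ range n, |y k| ≤ ∑ k ∈ range n, |x k| + ∑ k ∈ range n, |(x - y) k| := by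
  rw [← sum_add_distrib]
  gcongr with k
  rw [lp.coeFn_sub, Pi.sub_apply, abs_sub_comm]
  linarith [abs_sub_abs_le_abs_sub (y k) (x k)]

theorem norm_sub_le_norm_sub_norm_add_tail_add_head :
    ‖x - y‖ ≤ ‖x‖ - ‖y‖ + 2 * (∑' k, |y (k + n)| + ∑ k ∈ range n, |(x - y) k|) := by
  rw [norm_eq_sum_range_add_tsum_nat_add_of_one x n, norm_eq_sum_range_add_tsum_nat_add_of_one y n,
    norm_eq_sum_range_add_tsum_nat_add_of_one (x - y) n]
  linarith [tsum_abs_sub_nat_add_le x y n, sum_range_abs_le_sum_range_abs_add_abs_sub x y n]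

end lp

theorem sum_abs_apply_le_norm_mul_sum_opNorm {ι Y : Type*} [SeminormedAddCommGroup Y]
    [NormedSpace ℝ Y] (f : ι → StrongDual ℝ Y) (v : Y) (s : Finset ι) :
    ∑ k ∈ s, |f k v| ≤ ‖v‖ * ∑ k ∈ s, ‖f k‖ := by
  rw [mul_sum]
  gcongr with k
  rw [mul_comm, ← Real.norm_eq_abs]
  exact (f k).le_opNorm v

theorem stmt8_general {Y : Type*} [NormedAddCommGroup Y] [NormedSpace ℝ Y]
    (A : lp (fun _ : ℕ => ℝ) 1 →L[ℝ] Y)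
    (f : ℕ → (Y →L[ℝ] ℝ))
    (hf : ∀ (k : ℕ) (x : lp (fun _ : ℕ => ℝ) 1), f k (A x) = x k)
    (x xdag : lp (fun _ : ℕ => ℝ) 1) (n : ℕ) :
    ‖x - xdag‖ ≤ ‖x‖ - ‖xdag‖ +
      2 * ((∑' k : ℕ, |xdag (k + n)|) +
        ‖A (x - xdag)‖ * ∑ k ∈ Finset.range n, ‖f k‖) := by
  have head_le : ∑ k ∈ range n, |(x - xdag) k| ≤ ‖A (x - xdag)‖ * ∑ k ∈ range n, ‖f k‖ := by
    simpa only [hf] using sum_abs_apply_le_norm_mul_sum_opNorm f (A (x - xdag)) (range n)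
  calc ‖x - xdag‖
      ≤ ‖x‖ - ‖xdag‖ + 2 * (∑' k, |xdag (k + n)| + ∑ k ∈ range n, |(x - xdag) k|) :=
        lp.norm_sub_le_norm_sub_norm_add_tail_add_head x xdag n
    _ ≤ _ := by gcongr

/-- If `A : ℓ¹(ℕ) → Y` is bounded linear and for each `k` there is
`f_k ∈ Y*` with `f_k (A x) = x_k` for all `x`, then for all `x, x† ∈ ℓ¹(ℕ)` and `n`:
`‖x − x†‖₁ ≤ ‖x‖₁ − ‖x†‖₁ + 2(∑_{k>n}|x†_k| + ‖A(x − x†)‖ ∑_{k≤n} ‖f_k‖)`. -/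
theorem stmt8 {Y : Type*} [NormedAddCommGroup Y] [NormedSpace ℝ Y] [CompleteSpace Y]
    (A : lp (fun _ : ℕ => ℝ) 1 →L[ℝ] Y)
    (f : ℕ → (Y →L[ℝ] ℝ))
    (hf : ∀ (k : ℕ) (x : lp (fun _ : ℕ => ℝ) 1), f k (A x) = x k)
    (x xdag : lp (fun _ : ℕ => ℝ) 1) (n : ℕ) :
    ‖x - xdag‖ ≤ ‖x‖ - ‖xdag‖ +
      2 * ((∑' k : ℕ, |xdag (k + n)|) +
        ‖A (x - xdag)‖ * ∑ k ∈ Finset.range n, ‖f k‖) :=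
  stmt8_general A f hf x xdag n
end

section
/- Let Ã : X̃ → Y be an injective bounded linear operator between Banach spaces whose range is not closed, and let L : ℓ¹(ℕ) → X̃ be a bounded linear operator with dense range. Then the range of A := Ã ∘ L is not closed in Y. -/
/-! The range of `At ∘ L` is dense in the range of `At`, since `L` has dense range and `At` is
continuous. So if the range of `At ∘ L` were closed it would contain, hence equal, the range of
`At`, which would then be closed as well. -/

open Set

theorem Continuous.range_eq_range_comp_of_isClosed {α β γ : Type*} [TopologicalSpace α]
    [TopologicalSpace β] [TopologicalSpace γ] {g : β → γ} {f : α → β} (hg : Continuous g)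
    (hf : DenseRange f) (hclosed : IsClosed (range (g ∘ f))) : range g = range (g ∘ f) := by
  refine (range_comp_subset_range f g).antisymm' ?_
  calc range g ⊆ closure (g '' range f) := hg.range_subset_closure_image_dense hf
    _ = range (g ∘ f) := by rw [← range_comp, hclosed.closure_eq]

theorem stmt17_general {Xt Y : Type*} [NormedAddCommGroup Xt] [NormedSpace ℝ Xt]
    [NormedAddCommGroup Y] [NormedSpace ℝ Y]
    (At : Xt →L[ℝ] Y)
    (hnc : ¬ IsClosed (Set.range At))
    (L : lp (fun _ : ℕ => ℝ) 1 →L[ℝ] Xt) (hdense : DenseRange L) :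
    ¬ IsClosed (Set.range (fun x : lp (fun _ : ℕ => ℝ) 1 => At (L x))) := by
  intro hclosed
  apply hnc
  rwa [At.continuous.range_eq_range_comp_of_isClosed hdense hclosed]

/-- If `At : Xt → Y` is an injective bounded linear operator between Banach
spaces whose range is not closed, and `L : ℓ¹(ℕ) → Xt` is bounded linear with dense range,
then the range of `A = At ∘ L` is not closed in `Y`. -/
theorem stmt17 {Xt Y : Type*} [NormedAddCommGroup Xt] [NormedSpace ℝ Xt] [CompleteSpace Xt]
    [NormedAddCommGroup Y] [NormedSpace ℝ Y] [CompleteSpace Y]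
    (At : Xt →L[ℝ] Y) (hinj : Function.Injective At)
    (hnc : ¬ IsClosed (Set.range At))
    (L : lp (fun _ : ℕ => ℝ) 1 →L[ℝ] Xt) (hdense : DenseRange L) :
    ¬ IsClosed (Set.range (fun x : lp (fun _ : ℕ => ℝ) 1 => At (L x))) :=
  stmt17_general At hnc L hdense
end
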